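/- arXiv:2003.05749 — 2 statements merged into one kernel-verified Lean document; each statement's English description precedes it below -/
import Mathlib

section
/- Let α, β, γ, δ ∈ ℝ with α + δ ≠ 0 and αγ = 0. Then (𝔤₇, g, J) is a first kind algebraic Wanas soliton associated to the canonical connection ∇⁰ if and only if α = γ = 0, δ ≠ 0, and the soliton constant satisfies β² + c = 0; in that case the derivation D satisfies De₁ = 0, De₂ = −(β²+δ²)e₂ − (β²+δ²)e₃, De₃ = (β²+δ²)e₂ + (β²+δ²)e₃. -/
noncomputable section

/-- The underlying vector space `ℝ³`. -/
abbrev V : Type := Fin 3 → ℝ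

/-- The basis vector `e₁`. -/
def e1 : V := ![1, 0, 0]

/-- The basis vector `e₂`. -/
def e2 : V := ![0, 1, 0]

/-- The basis vector `e₃`. -/
def e3 : V := ![0, 0, 1]

/-- The Lorentzian metric `g` with `g(e₁,e₁) = g(e₂,e₂) = 1`, `g(e₃,e₃) = -1`. -/
def g (x y : V) : ℝ := x 0 * y 0 + x 1 * y 1 - x 2 * y 2

/-- The Lie bracket. -/
def br (α β γ δ : ℝ) (x y : V) : V :=
  (x 0 * y 1 - x 1 * y 0) • (-(α • e1) - β • e2 - β • e3) +
    (x 0 * y 2 - x 2 * y 0) • (α • e1 + β • e2 + β • e3) +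
    (x 1 * y 2 - x 2 * y 1) • (γ • e1 + δ • e2 + δ • e3)

/-- The canonical connection `∇⁰`. -/
def nab (α β γ δ : ℝ) (x y : V) : V :=
  (x 0 * y 0) • (α • e2) + (x 0 * y 1) • (-(α • e1)) + (x 1 * y 0) • (β • e2) +
    (x 1 * y 1) • (-(β • e1)) + (x 2 * y 0) • (-((β - γ / 2) • e2)) +
    (x 2 * y 1) • ((β - γ / 2) • e1)

/-- The torsion `T⁰(X,Y) = ∇⁰_X Y - ∇⁰_Y X - [X,Y]`. -/
def T (α β γ δ : ℝ) (x y : V) : V := nab α β γ δ x y - nab α β γ δ y x - br α β γ δ x y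

/-- The tensor `A⁰(X,Y)Z = T⁰(T⁰(X,Y),Z)`. -/
def A (α β γ δ : ℝ) (x y z : V) : V := T α β γ δ (T α β γ δ x y) z

/-- The curvature `R⁰(X,Y)Z = ∇⁰_X ∇⁰_Y Z - ∇⁰_Y ∇⁰_X Z - ∇⁰_{[X,Y]} Z`. -/
def Rc (α β γ δ : ℝ) (x y z : V) : V :=
  nab α β γ δ x (nab α β γ δ y z) - nab α β γ δ y (nab α β γ δ x z) - nab α β γ δ (br α β γ δ x y) z

/-- The Wanas tensor `W⁰(X,Y)Z = R⁰(X,Y)Z - A⁰(X,Y)Z`. -/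
def W (α β γ δ : ℝ) (x y z : V) : V := Rc α β γ δ x y z - A α β γ δ x y z

/-- `w⁰(X,Y) = -g(W⁰(X,e₁)Y,e₁) - g(W⁰(X,e₂)Y,e₂) + g(W⁰(X,e₃)Y,e₃)`. -/
def w (α β γ δ : ℝ) (x y : V) : ℝ :=
  -g (W α β γ δ x e1 y) e1 - g (W α β γ δ x e2 y) e2 + g (W α β γ δ x e3 y) e3

/-- `w̃⁰(X,Y) = (w⁰(X,Y) + w⁰(Y,X))/2`. -/
def wt (α β γ δ : ℝ) (x y : V) : ℝ := (w α β γ δ x y + w α β γ δ y x) / 2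

/-- `D` is a derivation of the Lie algebra. -/
def IsDeriv (α β γ δ : ℝ) (D : V →ₗ[ℝ] V) : Prop :=
  ∀ x y, D (br α β γ δ x y) = br α β γ δ (D x) y + br α β γ δ x (D y)


set_option maxHeartbeats 2000000

lemma Lcomb (L : V →ₗ[ℝ] V) (v : V) : L v = v 0 • L e1 + v 1 • L e2 + v 2 • L e3 := by
  have hv : v = v 0 • e1 + v 1 • e2 + v 2 • e3 := by
    funext i; fin_cases i <;> simp [e1, e2, e3]
  conv_lhs => rw [hv]
  simp

lemma w11 (α β γ δ : ℝ) : w α β γ δ e1 e1 = β*γ/2 - β^2 - α^2 := by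
  simp [w, W, Rc, A, T, nab, br, g, e1, e2, e3]; ring
lemma w12 (α β γ δ : ℝ) : w α β γ δ e1 e2 = -(α*β) := by
  simp [w, W, Rc, A, T, nab, br, g, e1, e2, e3]; ring
lemma w13 (α β γ δ : ℝ) : w α β γ δ e1 e3 = γ*δ/2 + α*β := by
  simp [w, W, Rc, A, T, nab, br, g, e1, e2, e3]; ring
lemma w21 (α β γ δ : ℝ) : w α β γ δ e2 e1 = -(α*β) := by
  simp [w, W, Rc, A, T, nab, br, g, e1, e2, e3]; ring
lemma w22 (α β γ δ : ℝ) : w α β γ δ e2 e2 = -δ^2 - 3*β*γ/2 - 2*β^2 - α^2 := by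
  simp [w, W, Rc, A, T, nab, br, g, e1, e2, e3]; ring
lemma w23 (α β γ δ : ℝ) : w α β γ δ e2 e3 = δ^2 + β*γ/2 + β^2 := by
  simp [w, W, Rc, A, T, nab, br, g, e1, e2, e3]; ring
lemma w31 (α β γ δ : ℝ) : w α β γ δ e3 e1 = -(α*γ) + α*β := by
  simp [w, W, Rc, A, T, nab, br, g, e1, e2, e3]; ring
lemma w32 (α β γ δ : ℝ) : w α β γ δ e3 e2 = δ^2 + β*γ + β^2 + α^2 := by
  simp [w, W, Rc, A, T, nab, br, g, e1, e2, e3]; ring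
lemma w33 (α β γ δ : ℝ) : w α β γ δ e3 e3 = -δ^2 - γ^2/2 - β*γ - α^2 := by
  simp [w, W, Rc, A, T, nab, br, g, e1, e2, e3]; ring

lemma Wrow (α β γ δ : ℝ) (Wan : V →ₗ[ℝ] V)
    (hWan : ∀ x y, w α β γ δ x y = g (Wan x) y) (x : V) :
    Wan x = ![w α β γ δ x e1, w α β γ δ x e2, -(w α β γ δ x e3)] := by
  funext i; fin_cases i
  · simpa [g, e1] using (hWan x e1).symm
  · simpa [g, e2] using (hWan x e2).symm
  · have h := (hWan x e3).symm
    simp [g, e3] at h ⊢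
    linarith

theorem g7_first_kind_algebraic_Wanas_soliton (α β γ δ : ℝ)
    (h1 : α + δ ≠ 0) (h2 : α * γ = 0)
    (Wan : V →ₗ[ℝ] V) (hWan : ∀ x y, w α β γ δ x y = g (Wan x) y)
    (c : ℝ) (D : V →ₗ[ℝ] V) :
    (IsDeriv α β γ δ D ∧ ∀ x, Wan x = c • x + D x) ↔
      α = 0 ∧ γ = 0 ∧ δ ≠ 0 ∧ β ^ 2 + c = 0 ∧
        D e1 = 0 ∧ D e2 = -((β ^ 2 + δ ^ 2) • e2) - (β ^ 2 + δ ^ 2) • e3 ∧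
        D e3 = (β ^ 2 + δ ^ 2) • e2 + (β ^ 2 + δ ^ 2) • e3 := by
  constructor
  · rintro ⟨hD, hS⟩
    have hDe1 : D e1 = ![β*γ/2 - β^2 - α^2 - c, -(α*β), -(γ*δ/2) - α*β] := by
      have h := hS e1
      rw [Wrow α β γ δ Wan hWan, w11, w12, w13] at h
      funext i
      have hi := congrFun h i
      fin_cases i <;> simp [e1] at hi ⊢ <;> linarith
    have hDe2 : D e2 = ![-(α*β), -δ^2 - 3*β*γ/2 - 2*β^2 - α^2 - c, -δ^2 - β*γ/2 - β^2] := by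
      have h := hS e2
      rw [Wrow α β γ δ Wan hWan, w21, w22, w23] at h
      funext i
      have hi := congrFun h i
      fin_cases i <;> simp [e2] at hi ⊢ <;> linarith
    have hDe3 : D e3 = ![-(α*γ) + α*β, δ^2 + β*γ + β^2 + α^2, δ^2 + γ^2/2 + β*γ + α^2 - c] := by
      have h := hS e3
      rw [Wrow α β γ δ Wan hWan, w31, w32, w33] at h
      funext i
      have hi := congrFun h i
      fin_cases i <;> simp [e3] at hi ⊢ <;> linarith
    have E12 := hD e1 e2
    have E13 := hD e1 e3
    have E23 := hD e2 e3
    rw [Lcomb D (br α β γ δ e1 e2), hDe1, hDe2, hDe3] at E12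
    rw [Lcomb D (br α β γ δ e1 e3), hDe1, hDe2, hDe3] at E13
    rw [Lcomb D (br α β γ δ e2 e3), hDe1, hDe2, hDe3] at E23
    have q1 : δ*c - γ^2*δ/2 + β^2*δ = 0 := by
      have h := congrFun E23 1; simp [br, e1, e2, e3] at h; linear_combination h
    have q2 : δ*c - γ^2*δ/2 + β*γ*δ + β^2*δ + α^2*δ = 0 := by
      have h := congrFun E23 2; simp [br, e1, e2, e3] at h; linear_combination h
    have q3 : β*c - β*γ^2/2 - β^2*γ + β^3 + α*β*δ = 0 := by
      have h := congrFun E13 1; simp [br, e1, e2, e3] at h; linear_combination h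
    have q4 : -(γ*δ^2/2) - β*c - β*γ^2/2 - β^2*γ - β^3 + α*γ*δ/2 - α*β*δ - 2*α^2*β = 0 := by
      have h := congrFun E12 2; simp [br, e1, e2, e3] at h; linear_combination h
    have q5 : α*c - α*γ^2/2 + α*β^2 = 0 := by
      have h := congrFun E13 0; simp [br, e1, e2, e3] at h; linear_combination h
    have q6 : β*c + β^3 - α*γ*δ/2 + α*β*δ + α^2*β = 0 := by
      have h := congrFun E13 2; simp [br, e1, e2, e3] at h; linear_combination h
    have q7 : -(γ^2*δ/2) - α*c - α*β*γ - α*β^2 - α^3 = 0 := by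
      have h := congrFun E12 0; simp [br, e1, e2, e3] at h; linear_combination h
    have hα0 : α = 0 := by
      rcases mul_eq_zero.mp h2 with hα | hγ
      · exact hα
      · subst hγ
        by_contra hαne
        have hcb : c + β^2 = 0 := by
          have : α * (c + β^2) = 0 := by linear_combination q5
          exact (mul_eq_zero.mp this).resolve_left hαne
        have hβ0 : β = 0 := by
          have : β * (α * (α + δ)) = 0 := by linear_combination q6 - β * hcb
          rcases mul_eq_zero.mp this with h | h
          · exact h
          · exact absurd (mul_eq_zero.mp h) (by push_neg; exact ⟨hαne, h1⟩)
        apply hαne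
        have : α^3 = 0 := by linear_combination -q7 - α * hcb
        exact pow_eq_zero_iff (by norm_num) |>.mp this
    subst hα0
    have hδ : δ ≠ 0 := by simpa using h1
    have hβγ : β * γ = 0 := by
      have : β * γ * δ = 0 := by linear_combination q2 - q1
      exact (mul_eq_zero.mp this).resolve_right hδ
    have hγ0 : γ = 0 := by
      have hb : β * (c + β^2) = 0 := by
        have h1' : β*γ^2 = 0 := by linear_combination γ * hβγ
        have h2' : β^2*γ = 0 := by linear_combination β * hβγ
        linear_combination q3 + h1'/2 + h2'
      have : γ * δ^2 = 0 := by
        have h1' : β*γ^2 = 0 := by linear_combination γ * hβγ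
        have h2' : β^2*γ = 0 := by linear_combination β * hβγ
        linear_combination -2*q4 - 2*hb - h1' - 2*h2'
      rcases mul_eq_zero.mp this with h | h
      · exact h
      · exact absurd (pow_eq_zero_iff (by norm_num) |>.mp h) hδ
    subst hγ0
    have hc : β^2 + c = 0 := by
      have : δ * (β^2 + c) = 0 := by linear_combination q1
      exact (mul_eq_zero.mp this).resolve_left hδ
    refine ⟨rfl, rfl, hδ, hc, ?_, ?_, ?_⟩
    · rw [hDe1]; funext i; fin_cases i <;> simp <;> linarith
    · rw [hDe2]; funext i; fin_cases i <;> simp [e2, e3] <;> linarith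
    · rw [hDe3]; funext i; fin_cases i <;> simp [e2, e3] <;> linarith
  · rintro ⟨hα, hγ, hδ, hc, hD1, hD2, hD3⟩
    subst hα; subst hγ
    have hc' : c = -β^2 := by linarith
    subst hc'
    constructor
    · intro x y
      rw [Lcomb D (br 0 β 0 δ x y), Lcomb D x, Lcomb D y, hD1, hD2, hD3]
      funext i; fin_cases i <;> simp [br, e1, e2, e3] <;> ring
    · intro x
      rw [Lcomb Wan x, Wrow 0 β 0 δ Wan hWan e1, Wrow 0 β 0 δ Wan hWan e2,
        Wrow 0 β 0 δ Wan hWan e3, w11, w12, w13, w21, w22, w23, w31, w32, w33,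
        Lcomb D x, hD1, hD2, hD3]
      funext i; fin_cases i <;> simp [e1, e2, e3] <;> ring
end
end

section
/- Let α, β, γ, δ ∈ ℝ with α + δ ≠ 0 and αγ = 0. Then (𝔤₇, g, J) is a second kind algebraic Wanas soliton associated to the canonical connection ∇⁰ if and only if α = γ = 0, δ ≠ 0, and the soliton constant satisfies β² + c = 0; in that case the derivation D satisfies De₁ = 0, De₂ = −(β²+δ²)e₂ − (β²+δ²)e₃, De₃ = (β²+δ²)e₂ + (β²+δ²)e₃. -/
noncomputable section

lemma vrepr (v : V) : v = v 0 • e1 + v 1 • e2 + v 2 • e3 := by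
  funext i; fin_cases i <;> simp [e1, e2, e3]

lemma wt_x_e1 (α β γ δ : ℝ) (x : V) :
    wt α β γ δ x e1 = (β*γ/2 - β^2 - α^2) * x 0 + (-(α*β)) * x 1
      + (γ*δ/4 - α*γ/2 + α*β) * x 2 := by
  simp [wt, w, W, Rc, A, T, nab, br, g, e1, e2, e3]; ring

lemma wt_x_e2 (α β γ δ : ℝ) (x : V) :
    wt α β γ δ x e2 = (-(α*β)) * x 0 + (-δ^2 - 3*β*γ/2 - 2*β^2 - α^2) * x 1
      + (δ^2 + 3*β*γ/4 + β^2 + α^2/2) * x 2 := by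
  simp [wt, w, W, Rc, A, T, nab, br, g, e1, e2, e3]; ring

lemma wt_x_e3 (α β γ δ : ℝ) (x : V) :
    wt α β γ δ x e3 = (γ*δ/4 - α*γ/2 + α*β) * x 0 + (δ^2 + 3*β*γ/4 + β^2 + α^2/2) * x 1
      + (-δ^2 - γ^2/2 - β*γ - α^2) * x 2 := by
  simp [wt, w, W, Rc, A, T, nab, br, g, e1, e2, e3]; ring
set_option maxHeartbeats 2000000 in
theorem g7_second_kind_algebraic_Wanas_soliton (α β γ δ : ℝ)
    (h1 : α + δ ≠ 0) (h2 : α * γ = 0)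
    (tWan : V →ₗ[ℝ] V) (htWan : ∀ x y, wt α β γ δ x y = g (tWan x) y)
    (c : ℝ) (D : V →ₗ[ℝ] V) :
    (IsDeriv α β γ δ D ∧ ∀ x, tWan x = c • x + D x) ↔
      α = 0 ∧ γ = 0 ∧ δ ≠ 0 ∧ β ^ 2 + c = 0 ∧
        D e1 = 0 ∧ D e2 = -((β ^ 2 + δ ^ 2) • e2) - (β ^ 2 + δ ^ 2) • e3 ∧
        D e3 = (β ^ 2 + δ ^ 2) • e2 + (β ^ 2 + δ ^ 2) • e3 := by
  have ht : ∀ x : V, tWan x =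
      ![(β*γ/2 - β^2 - α^2) * x 0 + (-(α*β)) * x 1 + (γ*δ/4 - α*γ/2 + α*β) * x 2,
        (-(α*β)) * x 0 + (-δ^2 - 3*β*γ/2 - 2*β^2 - α^2) * x 1 + (δ^2 + 3*β*γ/4 + β^2 + α^2/2) * x 2,
        -((γ*δ/4 - α*γ/2 + α*β) * x 0 + (δ^2 + 3*β*γ/4 + β^2 + α^2/2) * x 1 + (-δ^2 - γ^2/2 - β*γ - α^2) * x 2)] := by
    intro x
    have h1' := (htWan x e1).symm
    have h2' := (htWan x e2).symm
    have h3' := (htWan x e3).symm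
    rw [wt_x_e1] at h1'
    rw [wt_x_e2] at h2'
    rw [wt_x_e3] at h3'
    simp [g, e1, e2, e3] at h1' h2' h3'
    funext j
    fin_cases j <;> simp [h1', h2', h3'] <;> linarith
  constructor
  · rintro ⟨hDer, hEq⟩
    have hD : ∀ x, D x = tWan x - c • x := by
      intro x; rw [hEq x]; abel
    have E1 := congrFun (hDer e1 e2) 0
    have E2 := congrFun (hDer e1 e3) 0
    have E3 := congrFun (hDer e2 e3) 1
    simp [hD, ht, br, e1, e2, e3] at E1 E2 E3
    ring_nf at E1 E2 E3
    have ha4 : α ^ 4 = 0 := by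
      linear_combination (-α) * E1 + (-α) * E2 + (-(α*β) - γ*δ/4) * h2
    have ha : α = 0 := pow_eq_zero_iff (by norm_num : 4 ≠ 0) |>.mp ha4
    subst ha
    have hd : δ ≠ 0 := by simpa using h1
    have hg2 : γ ^ 2 * δ = 0 := by linear_combination (-4) * E1 + (-4) * E2
    have hg : γ = 0 := by
      have h' : γ ^ 2 = 0 := (mul_eq_zero.mp hg2).resolve_right hd
      exact pow_eq_zero_iff (by norm_num : 2 ≠ 0) |>.mp h'
    subst hg
    have hc : β ^ 2 + c = 0 := by
      have h' : δ * (β ^ 2 + c) = 0 := by linear_combination E3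
      exact (mul_eq_zero.mp h').resolve_left hd
    refine ⟨rfl, rfl, hd, hc, ?_, ?_, ?_⟩
    · rw [hD e1, ht e1]; funext j; fin_cases j <;> simp [e1, e2, e3] <;> linarith
    · rw [hD e2, ht e2]; funext j; fin_cases j <;> simp [e1, e2, e3] <;> linarith
    · rw [hD e3, ht e3]; funext j; fin_cases j <;> simp [e1, e2, e3] <;> linarith
  · rintro ⟨ha, hg, hd, hc, hD1, hD2, hD3⟩
    subst ha; subst hg
    have hc' : c = -β^2 := by linarith
    have hDv : ∀ v : V, D v = v 0 • D e1 + v 1 • D e2 + v 2 • D e3 := by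
      intro v
      conv_lhs => rw [vrepr v]
      simp
    constructor
    · intro x y
      rw [hDv (br 0 β 0 δ x y), hDv x, hDv y, hD1, hD2, hD3]
      funext j
      fin_cases j <;> simp [br, e1, e2, e3] <;> ring
    · intro x
      rw [hDv x, hD1, hD2, hD3, ht x, hc']
      funext j
      fin_cases j <;> simp [e1, e2, e3] <;> ring
end
end
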